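/- Let H be a bipartite graph with bipartition (A,B), and let e = (u,v) with u ∈ A, v ∈ B be a non-edge of H. Then for every q ≥ 2, ch(H+e, q)/ch(H, q) ≥ (q-1)/q, where ch(G,q) is the number of proper q-colorings of G. -/

import Mathlib

open SimpleGraph

/-- Number of proper colorings of a graph with q colors. -/
noncomputable def chrom {V : Type*} (H : SimpleGraph V) (q : ℕ) : ℕ :=
  Nat.card {c : V → Fin q // ∀ a b, H.Adj a b → c a ≠ c b}

/-!
Kempe chains. Proper colorings of `H + uv` are the proper colorings `c` of `H` with
`c u ≠ c v`. Given a proper coloring with `c u = c v = i` and a color `j ≠ i`, swap `i` and `j`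
on the `{i, j}`-Kempe chain through `u`. Since `H` is bipartite, that chain colors its vertices
in `A` with `i` and those outside `A` with `j`, so it misses `v`: the result colors `u` with `j`
and `v` with `i`. The swap is an involution and `i`, `j` can be read off at `v`, `u`, so this
gives an injection, hence `(q - 1) · #{c u = c v} ≤ #{c u ≠ c v}`, which is the bound.
-/

lemma Equiv.swap_apply_eq_or_eq_iff {α : Type*} [DecidableEq α] (i j z : α) :
    (Equiv.swap i j z = i ∨ Equiv.swap i j z = j) ↔ (z = i ∨ z = j) := by
  simp only [Equiv.swap_apply_eq_iff, Equiv.swap_apply_left, Equiv.swap_apply_right, or_comm]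

namespace SimpleGraph

variable {V α : Type*} (H : SimpleGraph V)

def IsProperColoring (c : V → α) : Prop := ∀ a b, H.Adj a b → c a ≠ c b

lemma Reachable.mem_of_adj_closed {G : SimpleGraph V} {S : Set V}
    (hS : ∀ a b, G.Adj a b → a ∈ S → b ∈ S) {x y : V} (h : G.Reachable x y) (hx : x ∈ S) :
    y ∈ S := by
  obtain ⟨w⟩ := h
  induction w with
  | nil => exact hx
  | cons hadj _ ih => exact ih (hS _ _ hadj hx)

lemma isProperColoring_sup_edge_iff {c : V → α} {u v : V} (huv : u ≠ v) :
    (H ⊔ fromEdgeSet {s(u, v)}).IsProperColoring c ↔ H.IsProperColoring c ∧ c u ≠ c v := by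
  refine ⟨fun h => ⟨fun a b hab => h a b (Or.inl hab), h u v (Or.inr ⟨rfl, huv⟩)⟩, ?_⟩
  rintro ⟨hc, hcuv⟩ a b (hab | ⟨hab, -⟩)
  · exact hc a b hab
  · rcases Sym2.eq_iff.mp hab with ⟨rfl, rfl⟩ | ⟨rfl, rfl⟩
    exacts [hcuv, hcuv.symm]

open Classical in
lemma isProperColoring_of_bipartite {A : Set V} (hbip : ∀ a b, H.Adj a b → (a ∈ A ↔ b ∉ A))
    {i j : α} (hij : i ≠ j) : H.IsProperColoring fun x => if x ∈ A then i else j := by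
  intro a b hab
  by_cases ha : a ∈ A
  · simp [ha, (hbip a b hab).mp ha, hij]
  · have hb : b ∈ A := by simpa [ha] using hbip a b hab
    simp [ha, hb, hij.symm]

section Kempe

variable (c : V → α) (i j : α)

def kempeGraph : SimpleGraph V where
  Adj x y := H.Adj x y ∧ (c x = i ∨ c x = j) ∧ (c y = i ∨ c y = j)
  symm := ⟨fun _ _ ⟨h, hx, hy⟩ => ⟨h.symm, hy, hx⟩⟩
  loopless := ⟨fun _ ⟨h, _⟩ => H.irrefl h⟩

variable [DecidableEq α]

open Classical in
noncomputable def kempeSwap (u : V) (x : V) : α :=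
  if (H.kempeGraph c i j).Reachable u x then Equiv.swap i j (c x) else c x

lemma kempeSwap_eq_or_eq_iff (u x : V) :
    (H.kempeSwap c i j u x = i ∨ H.kempeSwap c i j u x = j) ↔ (c x = i ∨ c x = j) := by
  unfold kempeSwap
  split_ifs
  exacts [Equiv.swap_apply_eq_or_eq_iff i j (c x), Iff.rfl]

lemma kempeGraph_kempeSwap (u : V) :
    H.kempeGraph (H.kempeSwap c i j u) i j = H.kempeGraph c i j := by
  ext x y
  exact and_congr_right' (and_congr (kempeSwap_eq_or_eq_iff ..) (kempeSwap_eq_or_eq_iff ..))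

lemma kempeSwap_kempeSwap (u : V) : H.kempeSwap (H.kempeSwap c i j u) i j u = c := by
  funext x
  conv_lhs => rw [kempeSwap, kempeGraph_kempeSwap]
  unfold kempeSwap
  split_ifs
  exacts [Equiv.swap_apply_self .., rfl]

lemma kempeSwap_self {u : V} (hu : c u = i) : H.kempeSwap c i j u u = j := by
  rw [kempeSwap, if_pos (Reachable.refl u), hu, Equiv.swap_apply_left]

lemma kempeSwap_of_not_reachable {u x : V} (hx : ¬(H.kempeGraph c i j).Reachable u x) :
    H.kempeSwap c i j u x = c x :=
  if_neg hx

variable {H c}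

lemma IsProperColoring.kempeSwap (hc : H.IsProperColoring c) (u : V) :
    H.IsProperColoring (H.kempeSwap c i j u) := by
  -- Across an edge leaving the Kempe component, the outside endpoint has a color other
  -- than `i`, `j`, so it cannot clash with the swapped color.
  have boundary : ∀ a b, H.Adj a b → (H.kempeGraph c i j).Reachable u a →
      ¬(H.kempeGraph c i j).Reachable u b → Equiv.swap i j (c a) ≠ c b := by
    intro a b hab ha hb hcol
    by_cases hca : c a = i ∨ c a = j
    · have hcb : c b = i ∨ c b = j := hcol ▸ (Equiv.swap_apply_eq_or_eq_iff i j _).mpr hca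
      exact hb (ha.trans (Adj.reachable ⟨hab, hca, hcb⟩))
    · push Not at hca
      exact hc a b hab (by rwa [Equiv.swap_apply_of_ne_of_ne hca.1 hca.2] at hcol)
  intro a b hab
  unfold SimpleGraph.kempeSwap
  split_ifs with ha hb hb
  · exact (Equiv.swap i j).injective.ne (hc a b hab)
  · exact boundary a b hab ha hb
  · exact (boundary b a hab.symm hb ha).symm
  · exact hc a b hab

end Kempe

variable {H}

-- Invariant along the chain: a vertex lies in `A` iff it has color `i`.
lemma not_reachable_kempeGraph_of_bipartite {A : Set V}
    (hbip : ∀ a b, H.Adj a b → (a ∈ A ↔ b ∉ A)) {c : V → α} (hc : H.IsProperColoring c)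
    {i j : α} (hij : i ≠ j) {u v : V} (hu : u ∈ A) (hv : v ∉ A) (hcu : c u = i) (hcv : c v = i) :
    ¬(H.kempeGraph c i j).Reachable u v := by
  intro hr
  have hS : ∀ a b, (H.kempeGraph c i j).Adj a b →
      a ∈ {x | x ∈ A ↔ c x = i} → b ∈ {x | x ∈ A ↔ c x = i} := by
    rintro a b ⟨hab, hca, hcb⟩ (ha : a ∈ A ↔ c a = i)
    have hne := hc a b hab
    show b ∈ A ↔ c b = i
    rw [← not_iff_not, ← hbip a b hab, ha]
    rcases hca with h | h <;> rcases hcb with h' | h' <;> simp_all [eq_comm]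
  have := Reachable.mem_of_adj_closed hS hr (show u ∈ A ↔ c u = i by simp [hu, hcu])
  exact hv ((this : v ∈ A ↔ c v = i).mpr hcv)

variable [Finite V] [Fintype α] [DecidableEq α]

lemma card_mul_le_card_of_bipartite {A : Set V} (hbip : ∀ a b, H.Adj a b → (a ∈ A ↔ b ∉ A))
    {u v : V} (hu : u ∈ A) (hv : v ∉ A) :
    Nat.card {c : {c : V → α // H.IsProperColoring c} // c.1 u = c.1 v} * (Fintype.card α - 1) ≤
      Nat.card {c : {c : V → α // H.IsProperColoring c} // c.1 u ≠ c.1 v} := by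
  let SameColor := {c : {c : V → α // H.IsProperColoring c} // c.1 u = c.1 v}
  have hnot_reach (c : SameColor) {j : α} (hj : j ≠ c.1.1 u) :=
    not_reachable_kempeGraph_of_bipartite hbip c.1.2 hj.symm hu hv rfl c.2.symm
  let recolor (c : SameColor) (j : {j // j ≠ c.1.1 u}) :
      {c : {c : V → α // H.IsProperColoring c} // c.1 u ≠ c.1 v} :=
    ⟨⟨H.kempeSwap c.1.1 (c.1.1 u) j u, c.1.2.kempeSwap _ _ u⟩, by
      dsimp only
      rw [kempeSwap_self _ _ _ _ rfl, kempeSwap_of_not_reachable _ _ _ _ (hnot_reach c j.2)]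
      exact fun hj => j.2 (hj.trans c.2.symm)⟩
  have hrecolor_inj :
      Function.Injective fun p : Σ c : SameColor, {j // j ≠ c.1.1 u} => recolor p.1 p.2 := by
    rintro ⟨⟨⟨c₁, hc₁⟩, hcuv₁⟩, ⟨j₁, hj₁⟩⟩ ⟨⟨⟨c₂, hc₂⟩, hcuv₂⟩, ⟨j₂, hj₂⟩⟩ h
    have h : H.kempeSwap c₁ (c₁ u) j₁ u = H.kempeSwap c₂ (c₂ u) j₂ u := congrArg (·.1.1) h
    have hi : c₁ u = c₂ u := calc
      c₁ u = H.kempeSwap c₁ (c₁ u) j₁ u v :=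
        hcuv₁.trans (kempeSwap_of_not_reachable _ _ _ _ (hnot_reach ⟨⟨c₁, hc₁⟩, hcuv₁⟩ hj₁)).symm
      _ = H.kempeSwap c₂ (c₂ u) j₂ u v := congrFun h v
      _ = c₂ u :=
        (kempeSwap_of_not_reachable _ _ _ _ (hnot_reach ⟨⟨c₂, hc₂⟩, hcuv₂⟩ hj₂)).trans hcuv₂.symm
    obtain rfl : j₁ = j₂ := by
      rw [← kempeSwap_self H c₁ _ j₁ rfl, h, kempeSwap_self _ _ _ _ rfl]
    obtain rfl : c₁ = c₂ := by
      rw [← kempeSwap_kempeSwap H c₁ (c₁ u) j₁ u, h, hi, kempeSwap_kempeSwap]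
    rfl
  calc Nat.card SameColor * (Fintype.card α - 1)
      = Nat.card (Σ c : SameColor, {j // j ≠ c.1.1 u}) := by
        have := Fintype.ofFinite SameColor
        simp [Fintype.card_subtype_compl]
    _ ≤ _ := Nat.card_le_card_of_injective _ hrecolor_inj

end SimpleGraph

section

variable {V : Type*} (H : SimpleGraph V) (q : ℕ)

open Classical in
lemma chrom_eq_card_add_card [Finite V] (u v : V) :
    chrom H q = Nat.card {c : {c : V → Fin q // H.IsProperColoring c} // c.1 u = c.1 v} +
      Nat.card {c : {c : V → Fin q // H.IsProperColoring c} // c.1 u ≠ c.1 v} := by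
  rw [← Nat.card_sum]
  exact Nat.card_congr (Equiv.sumCompl _).symm

lemma chrom_sup_edge {u v : V} (huv : u ≠ v) :
    chrom (H ⊔ fromEdgeSet {s(u, v)}) q =
      Nat.card {c : {c : V → Fin q // H.IsProperColoring c} // c.1 u ≠ c.1 v} :=
  Nat.card_congr <| (Equiv.subtypeEquivRight fun _ => H.isProperColoring_sup_edge_iff huv).trans
    (Equiv.subtypeSubtypeEquivSubtypeInter _ _).symm

variable {H q}

lemma chrom_pos_of_bipartite [Finite V] {A : Set V} (hbip : ∀ a b, H.Adj a b → (a ∈ A ↔ b ∉ A))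
    (hq : 2 ≤ q) : 0 < chrom H q :=
  have : Nonempty {c : V → Fin q // H.IsProperColoring c} :=
    ⟨⟨_, H.isProperColoring_of_bipartite hbip (i := ⟨0, by omega⟩) (j := ⟨1, by omega⟩)
      (by simp [Fin.ext_iff])⟩⟩
  Nat.card_pos (α := {c : V → Fin q // H.IsProperColoring c})

end

lemma sub_one_div_le_div_add {K : Type*} [Field K] [LinearOrder K] [IsStrictOrderedRing K]
    {q B G : K} (hq : 0 < q) (hBG : 0 < B + G) (h : B * (q - 1) ≤ G) :
    (q - 1) / q ≤ G / (B + G) := by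
  rw [div_le_div_iff₀ hq hBG]
  linear_combination h

theorem stmt_11_general {V : Type*} [Fintype V] (H : SimpleGraph V) (A : Set V)
    (hbip : ∀ a b, H.Adj a b → (a ∈ A ↔ b ∉ A)) (u v : V) (hu : u ∈ A) (hv : v ∉ A)
    (q : ℕ) (hq : 2 ≤ q) :
    (chrom (H ⊔ SimpleGraph.fromEdgeSet {s(u, v)}) q : ℝ) / (chrom H q : ℝ) ≥
      ((q : ℝ) - 1) / q := by
  have hpos := chrom_pos_of_bipartite hbip hq
  have hkempe := card_mul_le_card_of_bipartite (α := Fin q) hbip hu hv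
  rw [chrom_eq_card_add_card H q u v] at hpos ⊢
  rw [chrom_sup_edge H q (ne_of_mem_of_not_mem hu hv)]
  set B := Nat.card {c : {c : V → Fin q // H.IsProperColoring c} // c.1 u = c.1 v}
  set G := Nat.card {c : {c : V → Fin q // H.IsProperColoring c} // c.1 u ≠ c.1 v}
  rw [Fintype.card_fin] at hkempe
  have hkempe_real : (B : ℝ) * (q - 1) ≤ G := by
    have : ((B * (q - 1) : ℕ) : ℝ) ≤ G := by exact_mod_cast hkempe
    rwa [Nat.cast_mul, Nat.cast_sub (by omega), Nat.cast_one] at this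
  push_cast
  exact sub_one_div_le_div_add (by positivity) (by exact_mod_cast hpos) hkempe_real

theorem stmt_11 {V : Type*} [Fintype V] (H : SimpleGraph V) (A : Set V)
    (hbip : ∀ a b, H.Adj a b → (a ∈ A ↔ b ∉ A)) (u v : V) (hu : u ∈ A) (hv : v ∉ A)
    (hne : ¬ H.Adj u v) (huv : u ≠ v) (q : ℕ) (hq : 2 ≤ q) :
    (chrom (H ⊔ SimpleGraph.fromEdgeSet {s(u, v)}) q : ℝ) / (chrom H q : ℝ) ≥
      ((q : ℝ) - 1) / q :=
  stmt_11_general H A hbip u v hu hv q hq
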